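/- If A and B are 4×4 complex Hadamard matrices in dephased form and tr(A) = tr(B), then A and B are spectrally equivalent, i.e. the characteristic polynomial of A equals the characteristic polynomial of B. -/

import Mathlib

open Matrix Polynomial Complex

/-- A 4×4 complex Hadamard matrix: unitary with all entries of absolute value `1/√4`. -/
def IsHadamard (H : Matrix (Fin 4) (Fin 4) ℂ) : Prop :=
  H * Hᴴ = 1 ∧ Hᴴ * H = 1 ∧ ∀ i j, ‖H i j‖ = 1 / Real.sqrt 4

/-- Dephased form: all entries of the 0th row and 0th column equal `1/√4`. -/
def IsDephased (H : Matrix (Fin 4) (Fin 4) ℂ) : Prop :=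
  (∀ j, H 0 j = ((1 / Real.sqrt 4 : ℝ) : ℂ)) ∧ (∀ i, H i 0 = ((1 / Real.sqrt 4 : ℝ) : ℂ))


/-!
For `e = ±1` the vector `(2e + 1, 1, 1, 1)` is an eigenvector of `A` with eigenvalue `e`, because
the rows of `A` sum to `(2, 0, 0, 0)` and its first column is constant `1/2`. Hence
`χ_A = (X² - 1)(X² - t X - d)` with `t = tr A` and `d = det A`, and it remains to see that `t`
determines `d`. Since `A⁻¹ = Aᴴ`, comparing traces gives `conj t = tr A⁻¹ = -t / d`, which settles
`t ≠ 0`. For `t = 0`, four complex numbers of equal modulus summing to zero form two opposite pairs;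
applied to the diagonal and then to a few rows and columns, this pins `A` down, up to a
permutation fixing `0`, to one of two real matrices, both of determinant `1`.
-/

open scoped ComplexConjugate

theorem Complex.add_mul_add_mul_add_eq_zero {a b c d : ℂ} (hb : ‖b‖ = ‖a‖) (hc : ‖c‖ = ‖a‖)
    (hd : ‖d‖ = ‖a‖) (h : a + b + c + d = 0) : (a + b) * (a + c) * (a + d) = 0 := by
  have hconj : ∀ z : ℂ, ‖z‖ = ‖a‖ → z * conj z = a * conj a := fun z hz => by
    rw [mul_conj, mul_conj, normSq_eq_norm_sq, normSq_eq_norm_sq, hz]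
  rcases eq_or_ne a 0 with rfl | ha
  · simp [norm_eq_zero.mp (hb.trans norm_zero)]
  -- Expanding `conj a * (a + b) * (a + c) * (a + d)` and using `conj z = ‖a‖² / z` gives zero.
  have h' : conj a + conj b + conj c + conj d = 0 := by simpa using congrArg conj h
  refine (mul_eq_zero.mp ?_).resolve_left ((_root_.map_ne_zero conj).mpr ha)
  linear_combination conj a * a ^ 2 * h + b * c * d * h' - c * d * hconj b hb
    - b * d * hconj c hc - b * c * hconj d hd

theorem Polynomial.Monic.eq_X_pow_four_add {R : Type*} [CommRing R] {p : R[X]} (hp : p.Monic)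
    (hdeg : p.natDegree = 4) :
    p = X ^ 4 + C (p.coeff 3) * X ^ 3 + C (p.coeff 2) * X ^ 2 + C (p.coeff 1) * X
      + C (p.coeff 0) := by
  have h4 : p.coeff 4 = 1 := hdeg ▸ hp.coeff_natDegree
  conv_lhs => rw [p.as_sum_range_C_mul_X_pow' (n := 5) (by omega)]
  simp only [Finset.sum_range_succ, Finset.sum_range_zero, h4, map_one]
  ring

theorem Polynomial.Monic.coeff_one_eq_and_coeff_two_eq_of_isRoot {K : Type*} [Field K]
    [NeZero (2 : K)] {p : K[X]} (hp : p.Monic) (hdeg : p.natDegree = 4) (h₁ : p.IsRoot 1)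
    (h₂ : p.IsRoot (-1)) : p.coeff 1 = -p.coeff 3 ∧ p.coeff 2 = -1 - p.coeff 0 := by
  rw [IsRoot, hp.eq_X_pow_four_add hdeg] at h₁ h₂
  simp only [eval_add, eval_mul, eval_C, eval_pow, eval_X] at h₁ h₂
  have h2 : (2 : K) ≠ 0 := two_ne_zero
  constructor
  · apply mul_left_cancel₀ h2; linear_combination h₁ - h₂
  · apply mul_left_cancel₀ h2; linear_combination h₁ + h₂

theorem Matrix.trace_submatrix_equiv_self {m n R : Type*} [Fintype m] [Fintype n]
    [AddCommMonoid R] (e : m ≃ n) (A : Matrix n n R) : (A.submatrix e e).trace = A.trace :=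
  Fintype.sum_equiv e _ _ fun _ => rfl

theorem Matrix.trace_inv_mul_charpoly_coeff_zero {K n : Type*} [Field K] [Fintype n]
    [DecidableEq n] (A : Matrix n n K) (hA : A.det ≠ 0) :
    A⁻¹.trace * A.charpoly.coeff 0 = -A.charpoly.coeff 1 := by
  rcases isEmpty_or_nonempty n with hn | hn
  · simp [Matrix.charpoly, Matrix.trace, coeff_one]
  have hsign : ((-1 : K[X]) ^ Fintype.card n) = C ((-1) ^ Fintype.card n) := by simp
  have hinv := congrArg (coeff · (Fintype.card n - 1))
    (A.charpoly_inv ((A.isUnit_iff_isUnit_det).mpr hA.isUnit))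
  simp only [hsign, ← C_mul, coeff_C_mul, ← reverse_charpoly, coeff_reverse,
    charpoly_natDegree_eq_dim, Ring.inverse_eq_inv'] at hinv
  rw [revAt_le (Nat.sub_le _ _), Nat.sub_sub_self Fintype.card_pos] at hinv
  calc A⁻¹.trace * A.charpoly.coeff 0
      = -(A.det⁻¹ * ((-1) ^ Fintype.card n * A.charpoly.coeff 0) * A.charpoly.coeff 1) := by
        rw [trace_eq_neg_charpoly_coeff, hinv]; ring
    _ = -A.charpoly.coeff 1 := by
        rw [← det_eq_sign_charpoly_coeff, inv_mul_cancel₀ hA, one_mul]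

theorem Real.sqrt_four : √4 = 2 := by
  rw [show (4 : ℝ) = 2 ^ 2 by norm_num, sqrt_sq zero_le_two]

namespace IsDephased

variable {A : Matrix (Fin 4) (Fin 4) ℂ}

theorem apply_zero_left (hA : IsDephased A) (j : Fin 4) : A 0 j = 1 / 2 := by
  rw [hA.1 j, Real.sqrt_four]; push_cast; rfl

theorem apply_zero_right (hA : IsDephased A) (i : Fin 4) : A i 0 = 1 / 2 := by
  rw [hA.2 i, Real.sqrt_four]; push_cast; rfl

theorem transpose (hA : IsDephased A) : IsDephased Aᵀ := ⟨hA.2, hA.1⟩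

theorem submatrix (hA : IsDephased A) {σ : Equiv.Perm (Fin 4)} (hσ : σ 0 = 0) :
    IsDephased (A.submatrix σ σ) :=
  ⟨fun j => by simp [hσ, hA.1], fun i => by simp [hσ, hA.2]⟩

end IsDephased

namespace IsHadamard

variable {A : Matrix (Fin 4) (Fin 4) ℂ}

theorem norm_apply (hA : _root_.IsHadamard A) (i j : Fin 4) : ‖A i j‖ = 1 / 2 := by
  rw [hA.2.2, Real.sqrt_four]

theorem apply_ne_zero (hA : _root_.IsHadamard A) (i j : Fin 4) : A i j ≠ 0 :=
  norm_ne_zero_iff.mp (by norm_num [hA.norm_apply])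

theorem mul_conj_apply (hA : _root_.IsHadamard A) (i j : Fin 4) : A i j * conj (A i j) = 1 / 4 := by
  rw [Complex.mul_conj, Complex.normSq_eq_norm_sq, hA.norm_apply]; norm_num

theorem transpose (hA : _root_.IsHadamard A) : _root_.IsHadamard Aᵀ := by
  refine ⟨?_, ?_, fun i j => hA.2.2 j i⟩
  · rw [conjTranspose_transpose_eq_transpose_conjTranspose, ← transpose_mul, hA.2.1, transpose_one]
  · rw [conjTranspose_transpose_eq_transpose_conjTranspose, ← transpose_mul, hA.1, transpose_one]

theorem submatrix (hA : _root_.IsHadamard A) (σ : Equiv.Perm (Fin 4)) :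
    _root_.IsHadamard (A.submatrix σ σ) := by
  refine ⟨?_, ?_, fun i j => hA.2.2 (σ i) (σ j)⟩
  · rw [conjTranspose_submatrix, submatrix_mul_equiv, hA.1, submatrix_one_equiv]
  · rw [conjTranspose_submatrix, submatrix_mul_equiv, hA.2.1, submatrix_one_equiv]

theorem sum_mul_conj_eq_zero (hA : _root_.IsHadamard A) {i k : Fin 4} (hik : i ≠ k) :
    ∑ j, A i j * conj (A k j) = 0 := by
  simpa [mul_apply, one_apply_ne hik] using congrFun (congrFun hA.1 i) k

theorem sum_apply_eq_ite (hA : _root_.IsHadamard A) (hA' : IsDephased A) (i : Fin 4) :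
    ∑ j, A i j = if i = 0 then 2 else 0 := by
  have h := congrFun (congrFun hA.1 i) 0
  simp only [mul_apply, conjTranspose_apply, hA'.apply_zero_left, one_apply] at h
  simp only [← Finset.sum_mul, star_div₀, star_one, star_ofNat] at h
  split_ifs at h ⊢ <;> linear_combination 2 * h

theorem row_sum_eq_zero (hA : _root_.IsHadamard A) (hA' : IsDephased A) {i : Fin 4} (hi : i ≠ 0) :
    1 / 2 + A i 1 + A i 2 + A i 3 = 0 := by
  simpa [Fin.sum_univ_four, hA'.apply_zero_right, hi] using hA.sum_apply_eq_ite hA' i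

theorem col_sum_eq_zero (hA : _root_.IsHadamard A) (hA' : IsDephased A) {j : Fin 4} (hj : j ≠ 0) :
    1 / 2 + A 1 j + A 2 j + A 3 j = 0 :=
  hA.transpose.row_sum_eq_zero hA'.transpose hj

theorem mulVec_eq_smul (hA : _root_.IsHadamard A) (hA' : IsDephased A) {e : ℂ} (he : e ^ 2 = 1) :
    A *ᵥ (Pi.single 0 (2 * e) + 1) = e • (Pi.single 0 (2 * e) + 1) := by
  ext i
  have hsum := hA.sum_apply_eq_ite hA' i
  simp only [mulVec, dotProduct, Pi.add_apply, mul_add, Finset.sum_add_distrib, Pi.one_apply,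
    mul_one, Pi.smul_apply, smul_eq_mul, hsum, Pi.single_apply, mul_ite, mul_zero,
    Finset.sum_ite_eq', Finset.mem_univ, if_true, hA'.apply_zero_right]
  split_ifs
  · linear_combination -2 * he
  · ring

theorem isRoot_charpoly (hA : _root_.IsHadamard A) (hA' : IsDephased A) {e : ℂ} (he : e ^ 2 = 1) :
    A.charpoly.IsRoot e := by
  rw [IsRoot, eval_charpoly, ← exists_mulVec_eq_zero_iff]
  refine ⟨Pi.single 0 (2 * e) + 1, fun h => by simpa using congrFun h 1, ?_⟩
  rw [sub_mulVec, hA.mulVec_eq_smul hA' he, scalar_apply, ← smul_one_eq_diagonal, smul_mulVec,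
    one_mulVec, sub_self]

theorem charpoly_eq (hA : _root_.IsHadamard A) (hA' : IsDephased A) :
    A.charpoly = X ^ 4 - C A.trace * X ^ 3 - C (1 + A.det) * X ^ 2 + C A.trace * X + C A.det := by
  have hdeg : A.charpoly.natDegree = 4 := by simp [charpoly_natDegree_eq_dim]
  have h3 : A.charpoly.coeff 3 = -A.trace := by simp [trace_eq_neg_charpoly_coeff]
  have h0 : A.charpoly.coeff 0 = A.det := by rw [det_eq_sign_charpoly_coeff]; norm_num
  obtain ⟨h1, h2⟩ := A.charpoly_monic.coeff_one_eq_and_coeff_two_eq_of_isRoot hdeg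
    (hA.isRoot_charpoly hA' (one_pow 2)) (hA.isRoot_charpoly hA' (by norm_num))
  rw [A.charpoly_monic.eq_X_pow_four_add hdeg, h1, h2, h3, h0]
  simp only [map_neg, map_sub, map_one, map_add]
  ring

theorem charpoly_coeff_one (hA : _root_.IsHadamard A) (hA' : IsDephased A) :
    A.charpoly.coeff 1 = A.trace := by
  rw [hA.charpoly_eq hA']
  simp [coeff_C, coeff_X_pow, coeff_mul_X_pow']

theorem det_mul_conj_trace (hA : _root_.IsHadamard A) (hA' : IsDephased A) :
    A.det * conj A.trace = -A.trace := by
  have h := A.trace_inv_mul_charpoly_coeff_zero (det_ne_zero_of_left_inverse hA.2.1)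
  have h0 : A.charpoly.coeff 0 = A.det := by rw [det_eq_sign_charpoly_coeff]; norm_num
  rwa [inv_eq_left_inv hA.2.1, trace_conjTranspose, hA.charpoly_coeff_one hA', h0, mul_comm] at h

theorem exists_eq_of_trace_eq_zero_of_apply_one_one (hA : _root_.IsHadamard A)
    (hA' : IsDephased A) (ht : A.trace = 0) (h11 : A 1 1 = -(1 / 2)) :
    ∃ w : ℂ, w ^ 2 = 1 / 4 ∧ A = !![1 / 2, 1 / 2, 1 / 2, 1 / 2; 1 / 2, -(1 / 2), -w, w;
      1 / 2, -w, w, -(1 / 2); 1 / 2, w, -(1 / 2), -w] := by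
  have hdiag : A 0 0 + A 1 1 + A 2 2 + A 3 3 = 0 := by rwa [trace, Fin.sum_univ_four] at ht
  have h00 := hA'.apply_zero_right 0
  have h33 : A 3 3 = -A 2 2 := by linear_combination hdiag - h00 - h11
  have h13 : A 1 3 = -A 1 2 := by
    linear_combination hA.row_sum_eq_zero hA' (i := 1) (by decide) - h11
  have h31 : A 3 1 = -A 2 1 := by
    linear_combination hA.col_sum_eq_zero hA' (j := 1) (by decide) - h11
  have hsum : A 2 2 + A 1 2 + A 2 1 + A 2 2 = 0 := by
    linear_combination hA.col_sum_eq_zero hA' (j := 2) (by decide)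
      - hA.row_sum_eq_zero hA' (i := 3) (by decide) + h31 + h33
  have hpair := Complex.add_mul_add_mul_add_eq_zero (by rw [hA.norm_apply, hA.norm_apply])
    (by rw [hA.norm_apply, hA.norm_apply]) rfl hsum
  have h2 : A 2 2 + A 2 2 ≠ 0 := by
    rw [← two_mul]; exact mul_ne_zero two_ne_zero (hA.apply_ne_zero 2 2)
  have h12 : A 1 2 = -A 2 2 ∧ A 2 1 = -A 2 2 := by
    rcases mul_eq_zero.mp (mul_eq_zero.mp hpair |>.resolve_right h2) with h | h
    · exact ⟨by linear_combination h, by linear_combination hsum - h⟩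
    · exact ⟨by linear_combination hsum - h, by linear_combination h⟩
  have h23 : A 2 3 = -(1 / 2) := by
    linear_combination hA.row_sum_eq_zero hA' (i := 2) (by decide) - h12.2
  have h32 : A 3 2 = -(1 / 2) := by
    linear_combination hA.col_sum_eq_zero hA' (j := 2) (by decide) - h12.1
  have horth := hA.sum_mul_conj_eq_zero (i := 1) (k := 2) (by decide)
  rw [Fin.sum_univ_four, hA'.apply_zero_right, hA'.apply_zero_right, h11, h12.1, h12.2, h13,
    h12.1, h23] at horth
  simp only [map_neg, map_div₀, map_one, map_ofNat] at horth
  have hreal : conj (A 2 2) = A 2 2 := by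
    linear_combination 2 * horth + 2 * hA.mul_conj_apply 2 2
  have hsq : A 2 2 ^ 2 = 1 / 4 := by linear_combination hA.mul_conj_apply 2 2 - A 2 2 * hreal
  refine ⟨A 2 2, hsq, ?_⟩
  ext i j
  fin_cases i <;> fin_cases j <;>
    simp [hA'.apply_zero_left, hA'.apply_zero_right, h11, h12, h13, h23, h31, h32, h33]

theorem det_eq_one_of_trace_eq_zero_of_apply_one_one (hA : _root_.IsHadamard A)
    (hA' : IsDephased A) (ht : A.trace = 0) (h11 : A 1 1 = -(1 / 2)) : A.det = 1 := by
  obtain ⟨w, hw, rfl⟩ := hA.exists_eq_of_trace_eq_zero_of_apply_one_one hA' ht h11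
  simp [det_succ_row_zero, Fin.sum_univ_succ, Fin.succAbove]
  linear_combination 3 * hw

theorem det_eq_one_of_trace_eq_zero (hA : _root_.IsHadamard A) (hA' : IsDephased A)
    (ht : A.trace = 0) : A.det = 1 := by
  have hdiag : A 0 0 + A 1 1 + A 2 2 + A 3 3 = 0 := by rwa [trace, Fin.sum_univ_four] at ht
  have hnorm : ∀ k, ‖A k k‖ = ‖A 0 0‖ := fun k => by rw [hA.norm_apply, hA.norm_apply]
  -- Conjugating by `swap 1 k` moves a diagonal entry `A k k = -1/2` to position `(1, 1)`.
  have hswap : ∀ k : Fin 4, k ≠ 0 → A 0 0 + A k k = 0 → A.det = 1 := by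
    intro k hk hkk
    have hσ : Equiv.swap 1 k 0 = 0 := Equiv.swap_apply_of_ne_of_ne (by decide) hk.symm
    rw [← det_submatrix_equiv_self (Equiv.swap 1 k)]
    refine det_eq_one_of_trace_eq_zero_of_apply_one_one (hA.submatrix _) (hA'.submatrix hσ)
      (by rwa [trace_submatrix_equiv_self]) ?_
    simp only [submatrix_apply, Equiv.swap_apply_left]
    linear_combination hkk - hA'.apply_zero_right 0
  rcases mul_eq_zero.mp (Complex.add_mul_add_mul_add_eq_zero (hnorm 1) (hnorm 2) (hnorm 3) hdiag)
    with h | h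
  · rcases mul_eq_zero.mp h with h | h
    · exact hswap 1 (by decide) h
    · exact hswap 2 (by decide) h
  · exact hswap 3 (by decide) h

theorem det_eq_of_trace_eq {B : Matrix (Fin 4) (Fin 4) ℂ} (hA : _root_.IsHadamard A)
    (hA' : IsDephased A) (hB : _root_.IsHadamard B) (hB' : IsDephased B)
    (htr : A.trace = B.trace) : A.det = B.det := by
  rcases eq_or_ne A.trace 0 with h0 | h0
  · rw [hA.det_eq_one_of_trace_eq_zero hA' h0, hB.det_eq_one_of_trace_eq_zero hB' (htr ▸ h0)]
  · refine mul_right_cancel₀ ((_root_.map_ne_zero conj).mpr h0) ?_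
    rw [hA.det_mul_conj_trace hA', htr, hB.det_mul_conj_trace hB']

end IsHadamard

theorem trace_eq_implies_spectrally_equivalent
    (A B : Matrix (Fin 4) (Fin 4) ℂ)
    (hA : _root_.IsHadamard A) (hA' : IsDephased A)
    (hB : _root_.IsHadamard B) (hB' : IsDephased B)
    (htr : A.trace = B.trace) :
    A.charpoly = B.charpoly := by
  rw [hA.charpoly_eq hA', hB.charpoly_eq hB', htr, hA.det_eq_of_trace_eq hA' hB hB' htr]
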